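/- Let g = h ⊕ m be a finite-dimensional real Lie algebra with a vector-space direct sum decomposition, ⟨·,·⟩ a naturally reductive inner product on m, and f: m → m a metric f-structure. Set m₁ = im f and m₂ = ker f, and assume [m₁, m₁] ⊆ m₂ ⊕ h. Then, with (∇_X f)(Y) = ½([X, fY]_m − f([X,Y]_m)) and T(X,Y) = ¼ f((∇_{fX} f)(fY) − (∇_{f²X} f)(f²Y)), one has T(X,Y) = 0 for all X, Y ∈ m. (A naturally reductive homogeneous space with an invariant metric f-structure satisfying [m₁,m₁] ⊆ m₂ ⊕ h is a Hermitian f-manifold.) -/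

import Mathlib

/-! The bracket of two vectors of `m₁ = im f` lies in `m₂ ⊕ h`, so its `m`-component lies in
`m₂ = ker f`. Since `f U, f V ∈ m₁` whenever `U, V ∈ m₁`, both terms of `f ((∇_U f) V)` are
killed by `f`; the two terms of `T(X, Y)` have this form. -/

theorem Submodule.projectionOnto_mem_of_mem_map_sup {R E : Type*} [Ring R]
    [AddCommGroup E] [Module R E] {p q : Submodule R E} (hpq : IsCompl p q)
    {K : Submodule R p} {x : E} (hx : x ∈ K.map p.subtype ⊔ q) :
    p.projectionOnto q hpq x ∈ K := by
  obtain ⟨_, ⟨k, hk, rfl⟩, z, hz, rfl⟩ := Submodule.mem_sup.mp hx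
  rwa [map_add, Submodule.projectionOnto_apply_of_mem_right hpq hz, add_zero,
    Submodule.subtype_apply, Submodule.projectionOnto_apply_left]

theorem apply_projectionOnto_lie_eq_zero {R g : Type*} [CommRing R] [LieRing g]
    [LieAlgebra R g] {h m : Submodule R g} (hc : IsCompl h m) {f : m →ₗ[R] m}
    (hbr : ∀ X Y : m, X ∈ LinearMap.range f → Y ∈ LinearMap.range f →
      ⁅(X : g), (Y : g)⁆ ∈ (LinearMap.ker f).map m.subtype ⊔ h)
    {U V : m} (hU : U ∈ LinearMap.range f) (hV : V ∈ LinearMap.range f) :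
    f (m.projectionOnto h hc.symm ⁅(U : g), (V : g)⁆) = 0 :=
  Submodule.projectionOnto_mem_of_mem_map_sup hc.symm (hbr U V hU hV)

theorem stmt_16 (g : Type*) [LieRing g] [LieAlgebra ℝ g]
    (h m : Submodule ℝ g) (hc : IsCompl h m)
    (f : m →ₗ[ℝ] m)
    -- [m₁, m₁] ⊆ m₂ ⊕ h, where m₁ = im f and m₂ = ker f
    (hbr : ∀ X Y : m, X ∈ LinearMap.range f → Y ∈ LinearMap.range f →
      ⁅(X : g), (Y : g)⁆ ∈ (LinearMap.ker f).map m.subtype ⊔ h)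
    (nabla : m → m → m)
    (hnabla : ∀ X Y : m, nabla X Y = (1 / 2 : ℝ) •
      (m.linearProjOfIsCompl h hc.symm ⁅(X : g), (f Y : g)⁆ -
        f (m.linearProjOfIsCompl h hc.symm ⁅(X : g), (Y : g)⁆)))
    (T : m → m → m)
    (hT : ∀ X Y : m, T X Y = (1 / 4 : ℝ) •
      f (nabla (f X) (f Y) - nabla (f (f X)) (f (f Y)))) :
    ∀ X Y : m, T X Y = 0 := by
  have hnabla_range : ∀ U V : m, U ∈ LinearMap.range f → V ∈ LinearMap.range f →
      f (nabla U V) = 0 := by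
    intro U V hU hV
    rw [hnabla, Submodule.linearProjOfIsCompl, map_smul, map_sub,
      apply_projectionOnto_lie_eq_zero hc hbr hU (LinearMap.mem_range_self f V),
      apply_projectionOnto_lie_eq_zero hc hbr hU hV, map_zero, sub_zero, smul_zero]
  intro X Y
  rw [hT, map_sub, hnabla_range _ _ ⟨X, rfl⟩ ⟨Y, rfl⟩, hnabla_range _ _ ⟨f X, rfl⟩ ⟨f Y, rfl⟩,
    sub_zero, smul_zero]
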